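/- arXiv:2312.04026 — 3 statements merged into one kernel-verified Lean document; each statement's English description precedes it below -/
import Mathlib

section
/- Let n be an even positive integer, and for each i ∈ {1,…,n} let Y_i : {0,1} × [0,1] → ℝ be a fixed potential-outcome function that is L-Lipschitz in its second argument, i.e. |Y_i(z, ρ) − Y_i(z, ρ′)| ≤ L·|ρ − ρ′| for all z ∈ {0,1} and ρ, ρ′ ∈ [0,1]. Fix ρ ∈ [0,1] and interference levels ρ_1,…,ρ_n ∈ [0,1]. Let Z = (Z_1,…,Z_n) be uniformly distributed over all vectors in {0,1}^n with exactly n/2 coordinates equal to 1, and define τ̂ = (2/n)·Σ_i Y_i(Z_i, ρ_i)·Z_i − (2/n)·Σ_i Y_i(Z_i, ρ_i)·(1 − Z_i) and τ̄(ρ) = (1/n)·Σ_i (Y_i(1, ρ) − Y_i(0, ρ)). Then |𝔼[τ̂] − τ̄(ρ)| ≤ (2L/n)·Σ_i |ρ_i − ρ|. -/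
open Finset

/-- The completely randomized design: the set of binary assignment vectors on `n` units
with exactly `n/2` treated. -/
def crdSet (n : ℕ) : Finset (Fin n → Bool) :=
  Finset.univ.filter fun z => (Finset.univ.filter fun i => z i = true).card = n / 2

/-- Expectation of `f` under the uniform distribution on `crdSet n`. -/
noncomputable def crdExp (n : ℕ) (f : (Fin n → Bool) → ℝ) : ℝ :=
  (∑ z ∈ crdSet n, f z) / (crdSet n).card

/-- Real-valued treatment indicator. -/
def ind (b : Bool) : ℝ := if b then 1 else 0

/-!
Swapping treated and control units, `z ↦ !z`, maps the balanced design onto itself. Averaging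
`τ̂(z)` with `τ̂(!z)` makes every unit contribute `Yᵢ(1, ρᵢ)` once with sign `+` and `Yᵢ(0, ρᵢ)` once
with sign `-`, so `E[τ̂] = (1/n) Σᵢ (Yᵢ(1, ρᵢ) - Yᵢ(0, ρᵢ))`. Against `τ̄(ρ)` each unit then costs at
most `2L |ρᵢ - ρ|`: one Lipschitz bound for each of its two potential outcomes.
-/

lemma compl_mem_crdSet {n : ℕ} (hev : Even n) {z : Fin n → Bool} (hz : z ∈ crdSet n) :
    (fun j => !z j) ∈ crdSet n := by
  have hsplit := card_filter_add_card_filter_not (s := univ) fun i => z i = true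
  simp only [crdSet, mem_filter, mem_univ, true_and, Bool.not_eq_true', Bool.not_eq_true,
    card_univ, Fintype.card_fin] at hz hsplit ⊢
  obtain ⟨m, rfl⟩ := hev
  omega

lemma crdSet_nonempty (n : ℕ) : (crdSet n).Nonempty := by
  refine ⟨fun i => decide ((i : ℕ) < n / 2), ?_⟩
  simp only [crdSet, mem_filter, mem_univ, true_and, decide_eq_true_eq]
  rw [Fin.card_filter_val_lt]
  omega

lemma sum_crdSet_compl {M : Type*} [AddCommMonoid M] {n : ℕ} (hev : Even n)
    (f : (Fin n → Bool) → M) :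
    ∑ z ∈ crdSet n, f (fun j => !z j) = ∑ z ∈ crdSet n, f z :=
  sum_nbij' (fun z j => !z j) (fun z j => !z j) (fun _ hz => compl_mem_crdSet hev hz)
    (fun _ hz => compl_mem_crdSet hev hz) (by simp) (by simp) (fun _ _ => rfl)

lemma crdExp_eq_of_add_compl {n : ℕ} (hev : Even n) {f : (Fin n → Bool) → ℝ} {c : ℝ}
    (h : ∀ z, f z + f (fun j => !z j) = 2 * c) : crdExp n f = c := by
  have hcard : ((crdSet n).card : ℝ) ≠ 0 := by exact_mod_cast (crdSet_nonempty n).card_ne_zero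
  have hsum : 2 * ∑ z ∈ crdSet n, f z = (crdSet n).card * (2 * c) :=
    calc 2 * ∑ z ∈ crdSet n, f z = ∑ z ∈ crdSet n, (f z + f (fun j => !z j)) := by
          rw [sum_add_distrib, sum_crdSet_compl hev]; ring
      _ = (crdSet n).card * (2 * c) := by simp only [h, sum_const, nsmul_eq_mul]
  rw [crdExp, div_eq_iff hcard]
  linarith

lemma diffInMeans_term_add_compl (y : Bool → ℝ) (b : Bool) :
    (y b * ind b - y b * (1 - ind b)) + (y (!b) * ind (!b) - y (!b) * (1 - ind (!b)))
      = y true - y false := by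
  cases b <;> norm_num [ind] <;> ring

lemma crdExp_diffInMeans {n : ℕ} (hev : Even n) (y : Fin n → Bool → ℝ) :
    crdExp n (fun z => 2 / n * ∑ i, y i (z i) * ind (z i)
        - 2 / n * ∑ i, y i (z i) * (1 - ind (z i))) = 1 / n * ∑ i, (y i true - y i false) := by
  refine crdExp_eq_of_add_compl hev fun z => ?_
  rw [← mul_sub, ← mul_sub, ← mul_add, ← sum_sub_distrib, ← sum_sub_distrib, ← sum_add_distrib]
  simp only [diffInMeans_term_add_compl]
  ring

lemma abs_effect_sub_le {s : Set ℝ} {Y : Bool → ℝ → ℝ} {L : ℝ}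
    (hLip : ∀ b, ∀ x ∈ s, ∀ y ∈ s, |Y b x - Y b y| ≤ L * |x - y|) {x y : ℝ}
    (hx : x ∈ s) (hy : y ∈ s) :
    |(Y true x - Y false x) - (Y true y - Y false y)| ≤ 2 * L * |x - y| :=
  calc |(Y true x - Y false x) - (Y true y - Y false y)|
      = |(Y true x - Y true y) - (Y false x - Y false y)| := by ring_nf
    _ ≤ |Y true x - Y true y| + |Y false x - Y false y| := abs_sub _ _
    _ ≤ 2 * L * |x - y| := by linarith [hLip true x hx y hy, hLip false x hx y hy]

theorem stmt_7_general (n : ℕ) (hev : Even n)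
    (Y : Fin n → Bool → ℝ → ℝ) (L : ℝ)
    (hLip : ∀ i (b : Bool), ∀ ρ₁ ∈ Set.Icc (0 : ℝ) 1, ∀ ρ₂ ∈ Set.Icc (0 : ℝ) 1,
      |Y i b ρ₁ - Y i b ρ₂| ≤ L * |ρ₁ - ρ₂|)
    (ρ₀ : ℝ) (hρ₀ : ρ₀ ∈ Set.Icc (0 : ℝ) 1)
    (ρ : Fin n → ℝ) (hρ : ∀ i, ρ i ∈ Set.Icc (0 : ℝ) 1)
    (τhat : (Fin n → Bool) → ℝ)
    (hτ : ∀ z, τhat z = (2 / n) * (∑ i, Y i (z i) (ρ i) * ind (z i))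
                      - (2 / n) * (∑ i, Y i (z i) (ρ i) * (1 - ind (z i)))) :
    |crdExp n τhat - (1 / n) * ∑ i, (Y i true ρ₀ - Y i false ρ₀)|
      ≤ (2 * L / n) * ∑ i, |ρ i - ρ₀| := by
  have hunbiased : crdExp n τhat = 1 / n * ∑ i, (Y i true (ρ i) - Y i false (ρ i)) := by
    rw [funext hτ]
    exact crdExp_diffInMeans hev fun i b => Y i b (ρ i)
  rw [hunbiased, ← mul_sub, ← sum_sub_distrib, abs_mul, abs_of_nonneg (by positivity)]
  calc 1 / n * |∑ i, ((Y i true (ρ i) - Y i false (ρ i)) - (Y i true ρ₀ - Y i false ρ₀))|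
      ≤ 1 / n * ∑ i, |(Y i true (ρ i) - Y i false (ρ i)) - (Y i true ρ₀ - Y i false ρ₀)| := by
        gcongr
        exact abs_sum_le_sum_abs _ _
    _ ≤ 1 / n * ∑ i, 2 * L * |ρ i - ρ₀| := by
        gcongr with i
        exact abs_effect_sub_le (hLip i) (hρ i) hρ₀
    _ = 2 * L / n * ∑ i, |ρ i - ρ₀| := by
        rw [← mul_sum]
        ring

/-- With `Yᵢ` `L`-Lipschitz in the interference argument on `[0,1]`, target level
`ρ₀ ∈ [0,1]`, interference levels `ρᵢ ∈ [0,1]`, a completely randomized design `Z` on `n` units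
(`n` even, positive), the difference-in-means estimator `τ̂`, and
`τ̄(ρ₀) = (1/n)·Σᵢ (Yᵢ(1,ρ₀) - Yᵢ(0,ρ₀))`, one has
`|E[τ̂] - τ̄(ρ₀)| ≤ (2L/n)·Σᵢ |ρᵢ - ρ₀|`. -/
theorem stmt_7 (n : ℕ) (hn : 0 < n) (hev : Even n)
    (Y : Fin n → Bool → ℝ → ℝ) (L : ℝ)
    (hLip : ∀ i (b : Bool), ∀ ρ₁ ∈ Set.Icc (0 : ℝ) 1, ∀ ρ₂ ∈ Set.Icc (0 : ℝ) 1,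
      |Y i b ρ₁ - Y i b ρ₂| ≤ L * |ρ₁ - ρ₂|)
    (ρ₀ : ℝ) (hρ₀ : ρ₀ ∈ Set.Icc (0 : ℝ) 1)
    (ρ : Fin n → ℝ) (hρ : ∀ i, ρ i ∈ Set.Icc (0 : ℝ) 1)
    (τhat : (Fin n → Bool) → ℝ)
    (hτ : ∀ z, τhat z = (2 / n) * (∑ i, Y i (z i) (ρ i) * ind (z i))
                      - (2 / n) * (∑ i, Y i (z i) (ρ i) * (1 - ind (z i)))) :
    |crdExp n τhat - (1 / n) * ∑ i, (Y i true ρ₀ - Y i false ρ₀)|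
      ≤ (2 * L / n) * ∑ i, |ρ i - ρ₀| :=
  stmt_7_general n hev Y L hLip ρ₀ hρ₀ ρ hρ τhat hτ
end

section
/- Let n ≥ 2 be an even integer, and for each i ∈ {1,…,n} let Y_i : {0,1} × [0,1] → ℝ be a fixed potential-outcome function and ρ_i ∈ [0,1] a fixed interference level. Let Z = (Z_1,…,Z_n) be uniformly distributed over all vectors in {0,1}^n with exactly n/2 coordinates equal to 1, and define τ̂ = (2/n)·Σ_i Y_i(Z_i, ρ_i)·Z_i − (2/n)·Σ_i Y_i(Z_i, ρ_i)·(1 − Z_i). Then Var[τ̂] = (1/n)·S[c], where c_i = Y_i(1, ρ_i) + Y_i(0, ρ_i) and S[c] = (n−1)^{−1}·Σ_i (c_i − c̄)² with c̄ = n^{−1}·Σ_i c_i. -/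
/-
Write `s(b) = ±1` for the sign of a treatment indicator. Unit by unit,
`2·Yᵢ(zᵢ, ρᵢ)·(2·1[zᵢ] - 1) = cᵢ·s(zᵢ) + (Yᵢ(1, ρᵢ) - Yᵢ(0, ρᵢ))`, so `τ̂ - E τ̂ = n⁻¹ Σᵢ cᵢ s(Zᵢ)`.
The design is invariant under permutations of the units and every assignment has `Σᵢ s(Zᵢ) = 0`.
Exchangeability makes `E s(Zᵢ)` and `E s(Zᵢ) s(Zⱼ)` (for `i ≠ j`) independent of the units, and
balance then pins them down: `E s(Zᵢ) = 0` and `E s(Zᵢ) s(Zⱼ) = -1/(n-1)`. Expanding the square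
gives `E (Σᵢ cᵢ s(Zᵢ))² = n/(n-1) · Σᵢ (cᵢ - c̄)²`.
-/

open Finset

def spin (b : Bool) : ℝ := if b then 1 else -1

lemma spin_mul_self (b : Bool) : spin b * spin b = 1 := by
  cases b <;> norm_num [spin]

section ExchangeableDesign

variable {ι : Type*} {S : Finset (ι → Bool)}

def IsExchangeable (S : Finset (ι → Bool)) : Prop :=
  ∀ σ : Equiv.Perm ι, ∀ z ∈ S, z ∘ σ ∈ S

def IsBalanced [Fintype ι] (S : Finset (ι → Bool)) : Prop :=
  ∀ z ∈ S, ∑ i, spin (z i) = 0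

lemma sum_comp_perm (hS : IsExchangeable S) (σ : Equiv.Perm ι)
    (f : (ι → Bool) → ℝ) : ∑ z ∈ S, f (z ∘ σ) = ∑ z ∈ S, f z :=
  Finset.sum_nbij' (· ∘ σ) (· ∘ σ.symm) (fun z hz => hS σ z hz) (fun z hz => hS σ.symm z hz)
    (fun z _ => by ext; simp) (fun z _ => by ext; simp) (fun _ _ => rfl)

variable [Fintype ι] [DecidableEq ι]

lemma sum_spin_eq_zero (hS : IsExchangeable S) (hbal : IsBalanced S) (i : ι) :
    ∑ z ∈ S, spin (z i) = 0 := by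
  have hexch : ∀ j, ∑ z ∈ S, spin (z j) = ∑ z ∈ S, spin (z i) := fun j => by
    simpa using sum_comp_perm hS (Equiv.swap i j) fun z => spin (z i)
  have htotal : ∑ j, ∑ z ∈ S, spin (z j) = 0 := by
    rw [Finset.sum_comm]
    exact Finset.sum_eq_zero hbal
  rw [Finset.sum_congr rfl fun j _ => hexch j, Finset.sum_const, Finset.card_univ,
    nsmul_eq_mul] at htotal
  have : Nonempty ι := ⟨i⟩
  exact (mul_eq_zero.1 htotal).resolve_left (Nat.cast_ne_zero.2 Fintype.card_ne_zero)

lemma sum_spin_mul_spin (hS : IsExchangeable S) (hbal : IsBalanced S) (i j : ι) :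
    (∑ z ∈ S, spin (z i) * spin (z j)) * (Fintype.card ι - 1)
      = #S * ((if i = j then (Fintype.card ι : ℝ) else 0) - 1) := by
  by_cases hij : i = j
  · subst hij
    simp [spin_mul_self]
  have hexch : ∀ k ∈ Finset.univ.erase i,
      ∑ z ∈ S, spin (z i) * spin (z k) = ∑ z ∈ S, spin (z i) * spin (z j) := fun k hk => by
    have hik : i ≠ k := (Finset.ne_of_mem_erase hk).symm
    simpa [Equiv.swap_apply_of_ne_of_ne hij hik] using
      sum_comp_perm hS (Equiv.swap j k) fun z => spin (z i) * spin (z j)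
  have htotal : ∑ k, ∑ z ∈ S, spin (z i) * spin (z k) = 0 := by
    rw [Finset.sum_comm]
    exact Finset.sum_eq_zero fun z hz => by rw [← Finset.mul_sum, hbal z hz, mul_zero]
  rw [← Finset.add_sum_erase _ _ (Finset.mem_univ i), Finset.sum_congr rfl hexch,
    Finset.sum_const, Finset.card_erase_of_mem (Finset.mem_univ i), Finset.card_univ,
    nsmul_eq_mul, Nat.cast_pred (Fintype.card_pos_iff.2 ⟨i⟩)] at htotal
  simp only [spin_mul_self, Finset.sum_const, nsmul_eq_mul, mul_one] at htotal
  rw [if_neg hij]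
  linarith

lemma sum_sq_sum_mul_spin (hS : IsExchangeable S) (hbal : IsBalanced S) (c : ι → ℝ) :
    (∑ z ∈ S, (∑ i, c i * spin (z i)) ^ 2) * (Fintype.card ι - 1)
      = #S * Fintype.card ι * ∑ i, (c i - (∑ k, c k) / Fintype.card ι) ^ 2 := by
  set d : ι → ℝ := fun i => c i - (∑ k, c k) / Fintype.card ι
  have hd : ∑ i, d i = 0 := by
    rcases isEmpty_or_nonempty ι with hι | hι
    · simp
    simp only [d, Finset.sum_sub_distrib, Finset.sum_const, Finset.card_univ, nsmul_eq_mul]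
    rw [mul_div_cancel₀ _ (Nat.cast_ne_zero.2 Fintype.card_ne_zero), sub_self]
  have hcentre : ∀ z ∈ S, ∑ i, c i * spin (z i) = ∑ i, d i * spin (z i) := fun z hz => by
    simp only [d, sub_mul, Finset.sum_sub_distrib, ← Finset.mul_sum, hbal z hz, mul_zero,
      sub_zero]
  have hexpand : ∀ z ∈ S, (∑ i, c i * spin (z i)) ^ 2
      = ∑ i, ∑ j, d i * d j * (spin (z i) * spin (z j)) := fun z hz => by
    rw [hcentre z hz, sq, Finset.sum_mul_sum]
    exact Finset.sum_congr rfl fun i _ => Finset.sum_congr rfl fun j _ => by ring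
  calc (∑ z ∈ S, (∑ i, c i * spin (z i)) ^ 2) * (Fintype.card ι - 1)
      = ∑ i, ∑ j, d i * d j * ((∑ z ∈ S, spin (z i) * spin (z j)) * (Fintype.card ι - 1)) := by
        simp only [Finset.sum_congr rfl hexpand, Finset.sum_mul, Finset.mul_sum]
        rw [Finset.sum_comm]
        refine Finset.sum_congr rfl fun i _ => ?_
        rw [Finset.sum_comm]
        exact Finset.sum_congr rfl fun j _ => Finset.sum_congr rfl fun z _ => by ring
    _ = #S * Fintype.card ι * ∑ i, d i ^ 2 - #S * ((∑ i, d i) * ∑ j, d j) := by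
        simp only [sum_spin_mul_spin hS hbal, mul_sub, mul_one, Finset.sum_sub_distrib, mul_ite,
          mul_zero, Finset.sum_ite_eq, Finset.mem_univ, if_true]
        rw [Finset.sum_mul_sum, Finset.mul_sum, Finset.mul_sum]
        congr 1
        · exact Finset.sum_congr rfl fun i _ => by ring
        · refine Finset.sum_congr rfl fun i _ => ?_
          rw [Finset.mul_sum]
          exact Finset.sum_congr rfl fun j _ => by ring
    _ = #S * Fintype.card ι * ∑ i, d i ^ 2 := by rw [hd]; ring

end ExchangeableDesign

lemma crdSet_isExchangeable (n : ℕ) : IsExchangeable (crdSet n) := by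
  intro σ z hz
  simp only [crdSet, Finset.mem_filter, Finset.mem_univ, true_and] at hz ⊢
  rw [← hz, ← Finset.card_map σ.toEmbedding, Finset.map_filter]
  simp

lemma crdSet_isBalanced {n : ℕ} (hev : Even n) : IsBalanced (crdSet n) := by
  intro z hz
  simp only [crdSet, Finset.mem_filter, Finset.mem_univ, true_and] at hz
  have hcard := Finset.card_filter_add_card_filter_not (s := Finset.univ)
    fun i : Fin n => z i = true
  rw [hz, Finset.card_univ, Fintype.card_fin] at hcard
  simp only [spin, Finset.sum_ite, Finset.sum_const, nsmul_eq_mul, mul_one, mul_neg]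
  obtain ⟨r, rfl⟩ := hev
  have hhalf : (r + r) / 2 = r := by omega
  have huntreated : #{i | ¬z i = true} = r := by omega
  rw [hz, huntreated, hhalf]
  ring

lemma crdExp_sq_sub_crdExp {n : ℕ} {f g : (Fin n → Bool) → ℝ} {K : ℝ}
    (hfg : ∀ z, f z = g z + K) (hg : ∑ z ∈ crdSet n, g z = 0) :
    crdExp n (fun z => (f z - crdExp n f) ^ 2) = crdExp n fun z => g z ^ 2 := by
  have hcard : (#(crdSet n) : ℝ) ≠ 0 := Nat.cast_ne_zero.2 (crdSet_nonempty n).card_ne_zero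
  have hmean : crdExp n f = K := by
    rw [crdExp, Finset.sum_congr rfl fun z _ => hfg z, Finset.sum_add_distrib, hg,
      Finset.sum_const, nsmul_eq_mul]
    field_simp
    ring
  simp only [hmean, hfg, add_sub_cancel_right]

lemma mul_ind_sub_mul_one_sub_ind (y : Bool → ℝ) (b : Bool) :
    y b * ind b - y b * (1 - ind b) = ((y true + y false) * spin b + (y true - y false)) / 2 := by
  cases b <;> norm_num [ind, spin]; ring

theorem stmt_8_general (n : ℕ) (hn : 2 ≤ n) (hev : Even n)
    (Y : Fin n → Bool → ℝ → ℝ) (ρ : Fin n → ℝ)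
    (τhat : (Fin n → Bool) → ℝ)
    (hτ : ∀ z, τhat z = (2 / n) * (∑ i, Y i (z i) (ρ i) * ind (z i))
                      - (2 / n) * (∑ i, Y i (z i) (ρ i) * (1 - ind (z i))))
    (c : Fin n → ℝ) (hc : ∀ i, c i = Y i true (ρ i) + Y i false (ρ i)) :
    crdExp n (fun z => (τhat z - crdExp n τhat) ^ 2)
      = (1 / n) * ((∑ i, (c i - (∑ k, c k) / n) ^ 2) / ((n : ℝ) - 1)) := by
  have hS := crdSet_isExchangeable n
  have hbal := crdSet_isBalanced hev
  have hτspin : ∀ z, τhat z = (∑ i, c i * spin (z i)) / n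
      + (∑ i, (Y i true (ρ i) - Y i false (ρ i))) / n := fun z => by
    rw [hτ z, ← mul_sub, ← Finset.sum_sub_distrib, ← add_div,
      ← Finset.sum_add_distrib, Finset.mul_sum, Finset.sum_div]
    refine Finset.sum_congr rfl fun i _ => ?_
    rw [mul_ind_sub_mul_one_sub_ind (fun b => Y i b (ρ i)), hc]
    ring
  have hmean_zero : ∑ z ∈ crdSet n, (∑ i, c i * spin (z i)) / n = 0 := by
    simp only [← Finset.sum_div, Finset.sum_comm (s := crdSet n), ← Finset.mul_sum,
      sum_spin_eq_zero hS hbal, mul_zero, Finset.sum_const_zero, zero_div]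
  have hvar := sum_sq_sum_mul_spin hS hbal c
  rw [Fintype.card_fin] at hvar
  have hn0 : (n : ℝ) ≠ 0 := by positivity
  have hn1 : (n : ℝ) - 1 ≠ 0 := by
    have : (2 : ℝ) ≤ n := by exact_mod_cast hn
    linarith
  have hcard : (#(crdSet n) : ℝ) ≠ 0 := Nat.cast_ne_zero.2 (crdSet_nonempty n).card_ne_zero
  rw [crdExp_sq_sub_crdExp hτspin hmean_zero, crdExp]
  simp only [div_pow, ← Finset.sum_div]
  generalize ∑ i, (c i - (∑ k, c k) / n) ^ 2 = V at hvar ⊢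
  field_simp
  linear_combination hvar

/-- For `n ≥ 2` even, potential outcomes `Yᵢ`, interference levels `ρᵢ ∈ [0,1]`,
and the difference-in-means estimator `τ̂` under a completely randomized design on `n` units,
`Var[τ̂] = (1/n)·S[c]` where `cᵢ = Yᵢ(1,ρᵢ) + Yᵢ(0,ρᵢ)` and
`S[c] = (n-1)⁻¹·Σᵢ (cᵢ - c̄)²`, `c̄ = n⁻¹·Σᵢ cᵢ`. -/
theorem stmt_8 (n : ℕ) (hn : 2 ≤ n) (hev : Even n)
    (Y : Fin n → Bool → ℝ → ℝ) (ρ : Fin n → ℝ) (hρ : ∀ i, ρ i ∈ Set.Icc (0 : ℝ) 1)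
    (τhat : (Fin n → Bool) → ℝ)
    (hτ : ∀ z, τhat z = (2 / n) * (∑ i, Y i (z i) (ρ i) * ind (z i))
                      - (2 / n) * (∑ i, Y i (z i) (ρ i) * (1 - ind (z i))))
    (c : Fin n → ℝ) (hc : ∀ i, c i = Y i true (ρ i) + Y i false (ρ i)) :
    crdExp n (fun z => (τhat z - crdExp n τhat) ^ 2)
      = (1 / n) * ((∑ i, (c i - (∑ k, c k) / n) ^ 2) / ((n : ℝ) - 1)) :=
  stmt_8_general n hn hev Y ρ τhat hτ c hc
end

section
/- Let n ≥ 3, let Z = (Z_1,…,Z_n) and ρ = (ρ_1,…,ρ_n) be fixed real vectors with population variances V[Z] > 0, V[ρ] > 0 and population covariance C[Z,ρ] satisfying C[Z,ρ]² < V[Z]·V[ρ]. Let ε_1,…,ε_n be square-integrable real random variables with 𝔼[ε_i] = 0, Var[ε_i] = σ², and Cov[ε_i, ε_j] = 0 for i ≠ j, and let Y = α·1 + β·Z + γ·ρ + ε for fixed real numbers α, β, γ. Let (α̂, β̂, γ̂)ᵀ = (XᵀX)^{−1}XᵀY, where X is the n×3 matrix with columns (1,…,1)ᵀ, Z, ρ.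 Then Var[β̂ + γ̂] = (σ²/n) · (V[Z] + V[ρ] − 2·C[Z,ρ]) / (V[Z]·V[ρ] − C[Z,ρ]²); equivalently, Var[β̂ + γ̂] = (σ²/n) · V[Z − ρ] / (V[Z]·V[ρ] − C[Z,ρ]²). -/
open MeasureTheory Matrix ProbabilityTheory

/-! With `w = (0, 1, 1)` we have `β̂ + γ̂ = w ⬝ θ̂`. If `(XᵀX) v = w`, the symmetry of
`(XᵀX)⁻¹` gives `w ⬝ (XᵀX)⁻¹ Xᵀ Y = (X v) ⬝ Y`, an affine function of the errors with coefficient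
vector `X v`; for uncorrelated errors of common variance `σ²` its variance is
`σ² ‖X v‖² = σ² v ⬝ (XᵀX) v = σ² w ⬝ v`. After centring the covariates, `v` is explicit: its
slope coordinates are `a = (V[ρ] - C[Z,ρ]) / (n D)` and `b = (V[Z] - C[Z,ρ]) / (n D)` with
`D = V[Z] V[ρ] - C[Z,ρ]²`, so `w ⬝ v = a + b = (V[Z] + V[ρ] - 2 C[Z,ρ]) / (n D)`, and
`V[Z - ρ] = V[Z] + V[ρ] - 2 C[Z,ρ]`. -/

lemma variance_const_add_sum_mul {Ω ι : Type*} [MeasurableSpace Ω] {μ : Measure Ω}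
    [IsProbabilityMeasure μ] [Fintype ι] {ε : ι → Ω → ℝ} {σ : ℝ}
    (hε : ∀ i, MemLp (ε i) 2 μ) (hvar : ∀ i, Var[ε i; μ] = σ ^ 2)
    (hcov : Pairwise fun i j ↦ cov[ε i, ε j; μ] = 0) (K : ℝ) (a : ι → ℝ) :
    Var[fun ω ↦ K + ∑ i, a i * ε i ω; μ] = σ ^ 2 * ∑ i, a i ^ 2 := by
  classical
  have hcov' : ∀ i j, cov[ε i, ε j; μ] = if i = j then σ ^ 2 else 0 := by
    intro i j
    split_ifs with hij
    · rw [hij, covariance_self (hε j).aemeasurable, hvar]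
    · exact hcov hij
  rw [variance_const_add (X := fun ω ↦ ∑ i, a i * ε i ω)
      (memLp_finsetSum _ fun i _ ↦ (hε i).const_mul (a i)).1,
    variance_fun_sum fun i ↦ (hε i).const_mul (a i)]
  simp only [covariance_const_mul_left, covariance_const_mul_right, hcov', mul_ite, mul_zero,
    Finset.sum_ite_eq, Finset.mem_univ, if_true, Finset.mul_sum]
  exact Finset.sum_congr rfl fun i _ ↦ by ring

section LeastSquares

variable {m p : Type*} [Fintype m] [Fintype p] {X : Matrix m p ℝ} {v w : p → ℝ}

lemma mulVec_dotProduct_mulVec_of_gram (hv : (Xᵀ * X) *ᵥ v = w) (θ : p → ℝ) :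
    (X *ᵥ v) ⬝ᵥ (X *ᵥ θ) = w ⬝ᵥ θ := by
  rw [dotProduct_mulVec, ← mulVec_transpose, mulVec_mulVec, hv]

variable [DecidableEq p]

lemma dotProduct_inv_gram_mulVec (hX : IsUnit (Xᵀ * X).det) (hv : (Xᵀ * X) *ᵥ v = w)
    (y : m → ℝ) : w ⬝ᵥ ((Xᵀ * X)⁻¹ *ᵥ (Xᵀ *ᵥ y)) = (X *ᵥ v) ⬝ᵥ y := by
  have hinv : (Xᵀ * X)⁻¹ *ᵥ w = v := by
    rw [← hv, mulVec_mulVec, nonsing_inv_mul _ hX, one_mulVec]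
  have hsymm : (Xᵀ * X)⁻¹ᵀ = (Xᵀ * X)⁻¹ := by
    rw [transpose_nonsing_inv, transpose_mul, transpose_transpose]
  rw [dotProduct_mulVec, ← mulVec_transpose, hsymm, hinv, dotProduct_mulVec, vecMul_transpose]

lemma dotProduct_ols_eq_const_add_sum (hX : IsUnit (Xᵀ * X).det) (hv : (Xᵀ * X) *ᵥ v = w)
    {Ω : Type*} (θ : p → ℝ) (e : m → Ω → ℝ) :
    (fun ω ↦ w ⬝ᵥ ((Xᵀ * X)⁻¹ *ᵥ (Xᵀ *ᵥ (X *ᵥ θ + fun i ↦ e i ω))))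
      = fun ω ↦ w ⬝ᵥ θ + ∑ i, (X *ᵥ v) i * e i ω := by
  ext ω
  rw [dotProduct_inv_gram_mulVec hX hv, dotProduct_add, mulVec_dotProduct_mulVec_of_gram hv]
  rfl

variable {Ω : Type*} [MeasurableSpace Ω] {μ : Measure Ω} [IsProbabilityMeasure μ] {σ : ℝ}

lemma memLp_dotProduct_ols (hX : IsUnit (Xᵀ * X).det) (hv : (Xᵀ * X) *ᵥ v = w) (θ : p → ℝ)
    {e : m → Ω → ℝ} (he : ∀ i, MemLp (e i) 2 μ) :
    MemLp (fun ω ↦ w ⬝ᵥ ((Xᵀ * X)⁻¹ *ᵥ (Xᵀ *ᵥ (X *ᵥ θ + fun i ↦ e i ω)))) 2 μ := by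
  rw [dotProduct_ols_eq_const_add_sum hX hv]
  exact (memLp_const (w ⬝ᵥ θ)).add
    (memLp_finsetSum Finset.univ fun i _ ↦ (he i).const_mul ((X *ᵥ v) i))

lemma variance_dotProduct_ols (hX : IsUnit (Xᵀ * X).det) (hv : (Xᵀ * X) *ᵥ v = w)
    (θ : p → ℝ) {e : m → Ω → ℝ} (he : ∀ i, MemLp (e i) 2 μ) (hvar : ∀ i, Var[e i; μ] = σ ^ 2)
    (hcov : Pairwise fun i j ↦ cov[e i, e j; μ] = 0) :
    Var[fun ω ↦ w ⬝ᵥ ((Xᵀ * X)⁻¹ *ᵥ (Xᵀ *ᵥ (X *ᵥ θ + fun i ↦ e i ω))); μ] = σ ^ 2 * (w ⬝ᵥ v) := by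
  rw [dotProduct_ols_eq_const_add_sum hX hv, variance_const_add_sum_mul he hvar hcov,
    ← mulVec_dotProduct_mulVec_of_gram hv v]
  simp only [dotProduct, sq]

end LeastSquares

section Design

variable {n : ℕ}

noncomputable def centered (f : Fin n → ℝ) : Fin n → ℝ := fun i ↦ f i - (∑ k, f k) / n

-- `popCov f g` is the paper's `C[f, g]`, and `popCov f f` its `V[f]`.
noncomputable def popCov (f g : Fin n → ℝ) : ℝ := (centered f ⬝ᵥ centered g) / n

lemma sum_centered (hn : (n : ℝ) ≠ 0) (f : Fin n → ℝ) : ∑ i, centered f i = 0 := by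
  simp only [centered, Finset.sum_sub_distrib, Finset.sum_const, Finset.card_univ,
    Fintype.card_fin, nsmul_eq_mul]
  field_simp
  ring

lemma centered_dotProduct_centered (hn : (n : ℝ) ≠ 0) (f g : Fin n → ℝ) :
    centered f ⬝ᵥ centered g = n * popCov f g := by
  rw [popCov, mul_div_cancel₀ _ hn]

lemma dotProduct_centered_right (hn : (n : ℝ) ≠ 0) (f g : Fin n → ℝ) :
    f ⬝ᵥ centered g = n * popCov f g := by
  have h : centered f ⬝ᵥ centered g = f ⬝ᵥ centered g - (∑ k, f k) / n * ∑ i, centered g i := by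
    simp only [dotProduct, centered, Finset.mul_sum, ← Finset.sum_sub_distrib]
    exact Finset.sum_congr rfl fun i _ ↦ by ring
  rw [← centered_dotProduct_centered hn, h, sum_centered hn, mul_zero, sub_zero]

lemma dotProduct_eq_popCov_add (hn : (n : ℝ) ≠ 0) (f g : Fin n → ℝ) :
    f ⬝ᵥ g = n * popCov f g + (∑ k, f k) * (∑ k, g k) / n := by
  rw [← dotProduct_centered_right hn]
  simp only [dotProduct, centered, mul_sub, Finset.sum_sub_distrib, ← Finset.sum_mul]
  field_simp
  ring

lemma popCov_comm (f g : Fin n → ℝ) : popCov f g = popCov g f := by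
  rw [popCov, popCov, dotProduct_comm]

lemma popCov_sub_self (f g : Fin n → ℝ) :
    popCov (f - g) (f - g) = popCov f f + popCov g g - 2 * popCov f g := by
  have h : centered (f - g) = centered f - centered g := by
    ext i
    simp only [centered, Pi.sub_apply, Finset.sum_sub_distrib]
    ring
  simp only [popCov, h, sub_dotProduct, dotProduct_sub, dotProduct_comm (centered g)]
  ring

variable (Z ρ : Fin n → ℝ)

noncomputable def design : Matrix (Fin n) (Fin 3) ℝ := of fun i ↦ ![1, Z i, ρ i]

lemma design_mulVec (v : Fin 3 → ℝ) :
    design Z ρ *ᵥ v = fun i ↦ v 0 + Z i * v 1 + ρ i * v 2 := by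
  ext i
  simp [design, mulVec, dotProduct, Fin.sum_univ_three]

lemma design_transpose_mulVec (y : Fin n → ℝ) :
    (design Z ρ)ᵀ *ᵥ y = ![∑ i, y i, Z ⬝ᵥ y, ρ ⬝ᵥ y] := by
  ext j
  fin_cases j <;> simp [design, mulVec, dotProduct]

lemma det_design_gram (hn : (n : ℝ) ≠ 0) :
    ((design Z ρ)ᵀ * design Z ρ).det
      = n ^ 3 * (popCov Z Z * popCov ρ ρ - popCov Z ρ ^ 2) := by
  have hZρ := dotProduct_eq_popCov_add hn Z ρ
  have hρZ : ∑ i, ρ i * Z i = ∑ i, Z i * ρ i := Finset.sum_congr rfl fun i _ ↦ mul_comm _ _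
  have hZZ := dotProduct_eq_popCov_add hn Z Z
  have hρρ := dotProduct_eq_popCov_add hn ρ ρ
  simp only [dotProduct] at hZρ hZZ hρρ
  rw [det_fin_three]
  simp only [design, Fin.isValue, mul_apply, transpose_apply, of_apply, cons_val_zero,
    cons_val_one, cons_val, mul_one, one_mul, Finset.sum_const, Finset.card_univ,
    Fintype.card_fin, nsmul_eq_mul, hZZ, hρρ, hZρ, hρZ]
  field_simp
  ring

-- Centring the covariates reduces `(XᵀX) v = (0, 1, 1)` to a 2 × 2 system for the slopes `a, b`,
-- whose matrix is `n` times the covariance matrix of `(Z, ρ)`; the intercept is `-(a Z̄ + b ρ̄)`.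
noncomputable def slopeSumCoeffs : Fin 3 → ℝ :=
  let D := n * (popCov Z Z * popCov ρ ρ - popCov Z ρ ^ 2)
  let a := (popCov ρ ρ - popCov Z ρ) / D
  let b := (popCov Z Z - popCov Z ρ) / D
  ![-(a * (∑ k, Z k) / n + b * (∑ k, ρ k) / n), a, b]

lemma design_gram_mulVec_slopeSumCoeffs (hn : (n : ℝ) ≠ 0)
    (hD : popCov Z Z * popCov ρ ρ - popCov Z ρ ^ 2 ≠ 0) :
    ((design Z ρ)ᵀ * design Z ρ) *ᵥ slopeSumCoeffs Z ρ = ![0, 1, 1] := by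
  set D := n * (popCov Z Z * popCov ρ ρ - popCov Z ρ ^ 2)
  set a := (popCov ρ ρ - popCov Z ρ) / D
  set b := (popCov Z Z - popCov Z ρ) / D
  have hcentered : design Z ρ *ᵥ slopeSumCoeffs Z ρ = a • centered Z + b • centered ρ := by
    rw [design_mulVec]
    ext i
    simp only [slopeSumCoeffs, centered, Pi.add_apply, Pi.smul_apply, smul_eq_mul, cons_val]
    ring
  have hZ : a * (n * popCov Z Z) + b * (n * popCov Z ρ) = 1 := by
    rw [div_mul_eq_mul_div, div_mul_eq_mul_div, ← add_div, div_eq_one_iff_eq (mul_ne_zero hn hD)]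
    ring
  have hρ : a * (n * popCov ρ Z) + b * (n * popCov ρ ρ) = 1 := by
    rw [popCov_comm ρ Z, div_mul_eq_mul_div, div_mul_eq_mul_div, ← add_div,
      div_eq_one_iff_eq (mul_ne_zero hn hD)]
    ring
  rw [← mulVec_mulVec, hcentered, design_transpose_mulVec]
  simp only [dotProduct_add, dotProduct_smul, smul_eq_mul, dotProduct_centered_right hn, hZ, hρ,
    Pi.add_apply, Pi.smul_apply, Finset.sum_add_distrib, ← Finset.mul_sum, sum_centered hn,
    mul_zero, add_zero]

lemma dotProduct_slopeSumCoeffs :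
    ![0, 1, 1] ⬝ᵥ slopeSumCoeffs Z ρ = (popCov Z Z + popCov ρ ρ - 2 * popCov Z ρ)
      / (n * (popCov Z Z * popCov ρ ρ - popCov Z ρ ^ 2)) := by
  simp only [slopeSumCoeffs, dotProduct, Fin.sum_univ_three, cons_val_zero, cons_val_one,
    cons_val_two, tail_cons, head_cons, zero_mul, one_mul, zero_add]
  ring

end Design

theorem stmt_14_general {Ω : Type*} [MeasurableSpace Ω] (μ : Measure Ω) [IsProbabilityMeasure μ]
    (n : ℕ) (hn : 3 ≤ n) (Z ρ : Fin n → ℝ)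
    (VZ Vρ C : ℝ)
    (hVZdef : VZ = (∑ i, (Z i - (∑ k, Z k) / n) ^ 2) / n)
    (hVρdef : Vρ = (∑ i, (ρ i - (∑ k, ρ k) / n) ^ 2) / n)
    (hCdef : C = (∑ i, (Z i - (∑ k, Z k) / n) * (ρ i - (∑ k, ρ k) / n)) / n)
    (hC : C ^ 2 < VZ * Vρ)
    (ε : Fin n → Ω → ℝ) (hsq : ∀ i, MemLp (ε i) 2 μ)
    (σ : ℝ) (hvar : ∀ i, ∫ ω, (ε i ω - ∫ ω', ε i ω' ∂μ) ^ 2 ∂μ = σ ^ 2)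
    (hcov : ∀ i j, i ≠ j →
      ∫ ω, (ε i ω - ∫ ω', ε i ω' ∂μ) * (ε j ω - ∫ ω', ε j ω' ∂μ) ∂μ = 0)
    (α β γ : ℝ) (Y : Ω → Fin n → ℝ)
    (hY : ∀ ω i, Y ω i = α + β * Z i + γ * ρ i + ε i ω)
    (X : Matrix (Fin n) (Fin 3) ℝ) (hX : X = Matrix.of fun i => ![1, Z i, ρ i])
    (est : Ω → Fin 3 → ℝ) (hest : ∀ ω, est ω = (Xᵀ * X)⁻¹ *ᵥ (Xᵀ *ᵥ Y ω)) :
    (∫ ω, (est ω 1 + est ω 2 - ∫ ω', (est ω' 1 + est ω' 2) ∂μ) ^ 2 ∂μ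
        = (σ ^ 2 / n) * (VZ + Vρ - 2 * C) / (VZ * Vρ - C ^ 2)) ∧
    (∫ ω, (est ω 1 + est ω 2 - ∫ ω', (est ω' 1 + est ω' 2) ∂μ) ^ 2 ∂μ
        = (σ ^ 2 / n)
            * ((∑ i, (Z i - ρ i - (∑ k, (Z k - ρ k)) / n) ^ 2) / n)
            / (VZ * Vρ - C ^ 2)) := by
  obtain rfl : X = design Z ρ := hX
  obtain rfl : VZ = popCov Z Z := by rw [hVZdef]; simp only [popCov, dotProduct, centered, sq]
  obtain rfl : Vρ = popCov ρ ρ := by rw [hVρdef]; simp only [popCov, dotProduct, centered, sq]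
  obtain rfl : C = popCov Z ρ := hCdef
  have hn0 : (n : ℝ) ≠ 0 := Nat.cast_ne_zero.2 (by omega)
  have hD := (sub_pos.2 hC).ne'
  have hdet : IsUnit ((design Z ρ)ᵀ * design Z ρ).det := by
    rw [det_design_gram Z ρ hn0, isUnit_iff_ne_zero]
    exact mul_ne_zero (pow_ne_zero 3 hn0) hD
  have hgram := design_gram_mulVec_slopeSumCoeffs Z ρ hn0 hD
  have hsum : (fun ω ↦ est ω 1 + est ω 2) = fun ω ↦ ![0, 1, 1] ⬝ᵥ (((design Z ρ)ᵀ * design Z ρ)⁻¹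
      *ᵥ ((design Z ρ)ᵀ *ᵥ (design Z ρ *ᵥ ![α, β, γ] + fun i ↦ ε i ω))) := by
    ext ω
    have hYω : Y ω = design Z ρ *ᵥ ![α, β, γ] + fun i ↦ ε i ω := by
      ext i; simp [design_mulVec, hY, mul_comm, add_assoc]
    simp [← hYω, ← hest, dotProduct, Fin.sum_univ_three]
  have hVar : ∫ ω, (est ω 1 + est ω 2 - ∫ ω', (est ω' 1 + est ω' 2) ∂μ) ^ 2 ∂μ
      = σ ^ 2 * (![0, 1, 1] ⬝ᵥ slopeSumCoeffs Z ρ) := by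
    rw [← variance_eq_integral (hsum ▸ (memLp_dotProduct_ols hdet hgram _ hsq).aemeasurable), hsum]
    exact variance_dotProduct_ols hdet hgram _ hsq
      (fun i ↦ (variance_eq_integral (hsq i).aemeasurable).trans (hvar i)) hcov
  have hdiff : (∑ i, (Z i - ρ i - (∑ k, (Z k - ρ k)) / n) ^ 2) / n = popCov (Z - ρ) (Z - ρ) := by
    simp only [popCov, dotProduct, centered, Pi.sub_apply, sq]
  rw [hVar, dotProduct_slopeSumCoeffs, hdiff, popCov_sub_self]
  constructor <;> field_simp

/-- For `n ≥ 3`, fixed covariate vectors `Z, ρ` with positive population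
variances `V[Z], V[ρ]` and population covariance `C[Z,ρ]` with `C[Z,ρ]² < V[Z]·V[ρ]`,
square-integrable uncorrelated errors `εᵢ` with `E[εᵢ] = 0`, `Var[εᵢ] = σ²`, and responses
`Y = α·1 + β·Z + γ·ρ + ε`, the OLS estimator `(α̂,β̂,γ̂)ᵀ = (XᵀX)⁻¹XᵀY` satisfies
`Var[β̂ + γ̂] = (σ²/n)·(V[Z] + V[ρ] - 2C[Z,ρ])/(V[Z]·V[ρ] - C[Z,ρ]²)`; equivalently, the
numerator equals `V[Z - ρ]`. -/
theorem stmt_14 {Ω : Type*} [MeasurableSpace Ω] (μ : Measure Ω) [IsProbabilityMeasure μ]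
    (n : ℕ) (hn : 3 ≤ n) (Z ρ : Fin n → ℝ)
    (VZ Vρ C : ℝ)
    (hVZdef : VZ = (∑ i, (Z i - (∑ k, Z k) / n) ^ 2) / n)
    (hVρdef : Vρ = (∑ i, (ρ i - (∑ k, ρ k) / n) ^ 2) / n)
    (hCdef : C = (∑ i, (Z i - (∑ k, Z k) / n) * (ρ i - (∑ k, ρ k) / n)) / n)
    (hVZ : 0 < VZ) (hVρ : 0 < Vρ) (hC : C ^ 2 < VZ * Vρ)
    (ε : Fin n → Ω → ℝ) (hsq : ∀ i, MemLp (ε i) 2 μ)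
    (hmean : ∀ i, ∫ ω, ε i ω ∂μ = 0)
    (σ : ℝ) (hvar : ∀ i, ∫ ω, (ε i ω - ∫ ω', ε i ω' ∂μ) ^ 2 ∂μ = σ ^ 2)
    (hcov : ∀ i j, i ≠ j →
      ∫ ω, (ε i ω - ∫ ω', ε i ω' ∂μ) * (ε j ω - ∫ ω', ε j ω' ∂μ) ∂μ = 0)
    (α β γ : ℝ) (Y : Ω → Fin n → ℝ)
    (hY : ∀ ω i, Y ω i = α + β * Z i + γ * ρ i + ε i ω)
    (X : Matrix (Fin n) (Fin 3) ℝ) (hX : X = Matrix.of fun i => ![1, Z i, ρ i])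
    (est : Ω → Fin 3 → ℝ) (hest : ∀ ω, est ω = (Xᵀ * X)⁻¹ *ᵥ (Xᵀ *ᵥ Y ω)) :
    (∫ ω, (est ω 1 + est ω 2 - ∫ ω', (est ω' 1 + est ω' 2) ∂μ) ^ 2 ∂μ
        = (σ ^ 2 / n) * (VZ + Vρ - 2 * C) / (VZ * Vρ - C ^ 2)) ∧
    (∫ ω, (est ω 1 + est ω 2 - ∫ ω', (est ω' 1 + est ω' 2) ∂μ) ^ 2 ∂μ
        = (σ ^ 2 / n)
            * ((∑ i, (Z i - ρ i - (∑ k, (Z k - ρ k)) / n) ^ 2) / n)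
            / (VZ * Vρ - C ^ 2)) :=
  stmt_14_general μ n hn Z ρ VZ Vρ C hVZdef hVρdef hCdef hC ε hsq σ hvar hcov α β γ Y hY X hX est
    hest
end
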